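/- arXiv:2001.03888 — 7 statements merged into one kernel-verified Lean document; each statement's English description precedes it below -/
import Mathlib

section
/- Let φ, ψ : ℂ → ℝ be nonconstant harmonic functions. Then there is no injective C¹ map F : ℂ → ℂ with det((DF)_z) > 0 for all z, satisfying e^{ψ(F(z))}‖(DF)_z(v)‖ = e^{φ(z)}‖v‖ for all z ∈ ℂ and v ∈ ℂ, and whose range is a proper subset of ℂ. In other words, no harmonic metric on the plane is a subset metric of another harmonic plane. -/
/-- The Laplacian of `φ : ℂ → ℝ`, identifying ℂ with ℝ². -/
noncomputable def lap (φ : ℂ → ℝ) (z : ℂ) : ℝ :=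
  fderiv ℝ (fun w => fderiv ℝ φ w 1) z 1 +
    fderiv ℝ (fun w => fderiv ℝ φ w Complex.I) z Complex.I

/-- `φ : ℂ → ℝ` is harmonic: smooth with vanishing Laplacian everywhere. -/
def IsHarmonic (φ : ℂ → ℝ) : Prop :=
  ContDiff ℝ (⊤ : ℕ∞) φ ∧ ∀ z : ℂ, lap φ z = 0

section Aux

open Complex Set Metric


lemma lin_core (L : ℂ →L[ℝ] ℂ) (c : ℝ) (hc : 0 < c) (hn : ∀ v : ℂ, ‖L v‖ = c * ‖v‖)
    (hd : 0 < L.det) : ∀ v : ℂ, L v = L 1 * v := by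
  set a := L 1 with ha
  set b := L I with hb
  have hdecomp : ∀ v : ℂ, L v = v.re • a + v.im • b := by
    intro v
    have hv : v = v.re • (1 : ℂ) + v.im • I := by
      simp [Complex.real_smul, Complex.re_add_im]
    rw [ha, hb, ← map_smul, ← map_smul, ← map_add, ← hv]
  have hdetmat : L.det = a.re * b.im - a.im * b.re := by
    rw [ContinuousLinearMap.det, ← LinearMap.det_toMatrix Complex.basisOneI]
    rw [Matrix.det_fin_two]
    simp [LinearMap.toMatrix_apply, Complex.coe_basisOneI, Complex.coe_basisOneI_repr]
    ring
  have hsq : ∀ z : ℂ, z.re ^ 2 + z.im ^ 2 = ‖z‖ ^ 2 := fun z => by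
    rw [← Complex.normSq_eq_norm_sq, Complex.normSq_apply]; ring
  have hna : a.re ^ 2 + a.im ^ 2 = c ^ 2 := by
    rw [hsq a, ha, hn 1, norm_one, mul_one]
  have hnb : b.re ^ 2 + b.im ^ 2 = c ^ 2 := by
    rw [hsq b, hb, hn I, Complex.norm_I, mul_one]
  have hab : (a + b).re ^ 2 + (a + b).im ^ 2 = 2 * c ^ 2 := by
    have h1I : ‖(1 : ℂ) + I‖ ^ 2 = 2 := by
      rw [← hsq]; simp; norm_num
    have : a + b = L (1 + I) := by rw [map_add, ← ha, ← hb]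
    rw [hsq, this, hn (1 + I), mul_pow, h1I]; ring
  set p := a.re; set q := a.im; set r := b.re; set s := b.im
  have horth : p * r + q * s = 0 := by
    have h1 : (a + b).re = p + r := by simp [Complex.add_re]; rfl
    have h2 : (a + b).im = q + s := by simp [Complex.add_im]; rfl
    rw [h1, h2] at hab
    nlinarith [hna, hnb]
  have hdpos : 0 < p * s - q * r := by rw [hdetmat] at hd; linarith
  have hcross : (p * s - q * r) ^ 2 = (c ^ 2) ^ 2 := by
    linear_combination (r ^ 2 + s ^ 2) * hna + c ^ 2 * hnb - (p * r + q * s) * horth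
  have hps : p * s - q * r = c ^ 2 := by nlinarith [sq_nonneg (p * s - q * r + c ^ 2)]
  have hzero : (r + q) ^ 2 + (s - p) ^ 2 = 0 := by linear_combination hna + hnb - 2 * hps
  have h1 : (r + q) ^ 2 = 0 := by linarith [sq_nonneg (s - p), sq_nonneg (r + q)]
  have h2 : (s - p) ^ 2 = 0 := by linarith [sq_nonneg (s - p), sq_nonneg (r + q)]
  have hr : r = -q := by have := (pow_eq_zero_iff two_ne_zero).mp h1; linarith
  have hs : s = p := by have := (pow_eq_zero_iff two_ne_zero).mp h2; linarith
  have hbIa : b = I * a := by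
    apply Complex.ext
    · rw [Complex.mul_re]; simp; exact hr
    · rw [Complex.mul_im]; simp; exact hs
  intro v
  rw [hdecomp v, hbIa, Complex.real_smul, Complex.real_smul]
  calc (v.re : ℂ) * a + (v.im : ℂ) * (I * a) = ((v.re : ℂ) + (v.im : ℂ) * I) * a := by ring
    _ = a * v := by rw [Complex.re_add_im, mul_comm]

lemma holo (F : ℂ → ℂ) (hdiff : Differentiable ℝ F)
    (hdet : ∀ z, 0 < (fderiv ℝ F z).det)
    (hconf : ∀ z, ∃ c : ℝ, 0 < c ∧ ∀ v, ‖fderiv ℝ F z v‖ = c * ‖v‖) :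
    Differentiable ℂ F ∧ ∀ z, deriv F z ≠ 0 := by
  have key : ∀ z, DifferentiableAt ℂ F z ∧ deriv F z ≠ 0 := by
    intro z
    obtain ⟨c, hc, hn⟩ := hconf z
    set L := fderiv ℝ F z with hL
    have hl := lin_core L c hc hn (hdet z)
    have hCd : DifferentiableAt ℂ F z := by
      rw [differentiableAt_iff_restrictScalars ℝ (hdiff z)]
      refine ⟨(L 1) • (1 : ℂ →L[ℂ] ℂ), ?_⟩
      ext v
      simp [hl v]; exact (hl v).symm
    refine ⟨hCd, ?_⟩
    have hfd : fderiv ℝ F z = (fderiv ℂ F z).restrictScalars ℝ :=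
      (hCd.hasFDerivAt.restrictScalars ℝ).fderiv
    have hderiv : deriv F z = L 1 := by
      rw [← fderiv_apply_one_eq_deriv, hL, hfd]; rfl
    have : ‖L 1‖ = c := by rw [hn 1, norm_one, mul_one]
    rw [hderiv]
    intro h0
    rw [h0, norm_zero] at this
    exact hc.ne this
  exact ⟨fun z => (key z).1, fun z => (key z).2⟩


lemma surj_of_inj (F : ℂ → ℂ) (hF : Differentiable ℂ F) (hinj : Function.Injective F)
    (hd : ∀ z, deriv F z ≠ 0) : Set.range F = Set.univ := by
  -- the image of the unit ball is open
  have hana : AnalyticOnNhd ℂ F Set.univ := fun z _ => hF.analyticAt z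
  have hopen : IsOpen (F '' Metric.ball 0 1) := by
    rcases hana.is_constant_or_isOpen isPreconnected_univ with ⟨w, hw⟩ | h
    · exfalso
      have h01 : (0 : ℂ) = 1 := hinj ((hw 0 trivial).trans (hw 1 trivial).symm)
      simp at h01
    · exact h _ (Set.subset_univ _) Metric.isOpen_ball
  obtain ⟨δ, hδpos, hδball⟩ := Metric.isOpen_iff.mp hopen (F 0) ⟨0, by simp, rfl⟩
  have hfar : ∀ z : ℂ, 1 ≤ ‖z‖ → δ ≤ ‖F z - F 0‖ := by
    intro z hz
    by_contra h
    push_neg at h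
    have hmem : F z ∈ Metric.ball (F 0) δ := by
      rw [Metric.mem_ball, dist_eq_norm]; exact h
    obtain ⟨y, hy, hyz⟩ := hδball hmem
    rw [hinj hyz] at hy
    rw [Metric.mem_ball, dist_zero_right] at hy
    linarith
  set g := dslope F 0 with hg
  have hgdiff : Differentiable ℂ g := by
    intro z
    rcases eq_or_ne z 0 with rfl | hz
    · obtain ⟨p, hp⟩ := hF.analyticAt 0
      exact hp.has_fpower_series_dslope_fslope.analyticAt.differentiableAt
    · exact (differentiableAt_dslope_of_ne hz).mpr (hF z)
  have hgne : ∀ z, g z ≠ 0 := by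
    intro z h0
    rcases eq_or_ne z 0 with rfl | hz
    · exact hd 0 (by rwa [hg, dslope_same] at h0)
    · have hss := sub_smul_dslope F 0 z
      rw [← hg, h0, smul_zero] at hss
      exact hz (hinj (sub_eq_zero.mp hss.symm))
  set K := fun z => (g z)⁻¹ with hK
  have hKdiff : Differentiable ℂ K := fun z => ((hgdiff z).inv (hgne z))
  have hKne : ∀ z, K z ≠ 0 := fun z => inv_ne_zero (hgne z)
  have hKbound : ∀ z : ℂ, 1 ≤ ‖z‖ → ‖K z‖ ≤ ‖z‖ / δ := by
    intro z hz
    have hzne : z ≠ 0 := by intro h; rw [h, norm_zero] at hz; linarith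
    have hss := sub_smul_dslope F 0 z
    rw [← hg, sub_zero, smul_eq_mul] at hss
    have hgz : ‖g z‖ = ‖F z - F 0‖ / ‖z‖ := by
      rw [eq_div_iff (norm_ne_zero_iff.mpr hzne), ← norm_mul, mul_comm, hss]
    rw [hK]
    simp only
    rw [norm_inv, hgz, inv_div]
    exact div_le_div_of_nonneg_left (norm_nonneg z) hδpos (hfar z hz)
  -- the difference quotient of K at 0 is entire and bounded, hence constant
  set G := dslope K 0 with hG
  have hGdiff : Differentiable ℂ G := by
    intro z
    rcases eq_or_ne z 0 with rfl | hz
    · obtain ⟨p, hp⟩ := hKdiff.analyticAt 0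
      exact hp.has_fpower_series_dslope_fslope.analyticAt.differentiableAt
    · exact (differentiableAt_dslope_of_ne hz).mpr (hKdiff z)
  obtain ⟨C, hC⟩ := (isCompact_closedBall (0 : ℂ) 1).exists_bound_of_continuousOn
    hGdiff.continuous.continuousOn
  have hGbound : ∀ z : ℂ, ‖G z‖ ≤ max C (1 / δ + ‖K 0‖) := by
    intro z
    rcases le_total ‖z‖ 1 with hz | hz
    · exact le_max_of_le_left (hC z (by rwa [mem_closedBall, dist_zero_right]))
    · refine le_max_of_le_right ?_
      have hzne : z ≠ 0 := by intro h; rw [h, norm_zero] at hz; linarith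
      have hss := sub_smul_dslope K 0 z
      rw [← hG, sub_zero, smul_eq_mul] at hss
      have hzpos : (0:ℝ) < ‖z‖ := by linarith
      have hGz : ‖G z‖ = ‖K z - K 0‖ / ‖z‖ := by
        rw [eq_div_iff (norm_ne_zero_iff.mpr hzne), ← norm_mul, mul_comm, hss]
      rw [hGz, div_le_iff₀ hzpos]
      have h1 : ‖K z - K 0‖ ≤ ‖K z‖ + ‖K 0‖ := norm_sub_le _ _
      have h2 : ‖K z‖ ≤ ‖z‖ / δ := hKbound z hz
      have h3 : ‖z‖ / δ = ‖z‖ * (1 / δ) := by ring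
      nlinarith [norm_nonneg (K 0), norm_nonneg (K z)]
  have hGbdd : Bornology.IsBounded (Set.range G) := by
    rw [Metric.isBounded_iff_subset_closedBall 0]
    refine ⟨max C (1 / δ + ‖K 0‖), ?_⟩
    rintro _ ⟨z, rfl⟩
    rw [mem_closedBall, dist_zero_right]
    exact hGbound z
  have hGconst : ∀ z : ℂ, G z = G 0 := fun z =>
    hGdiff.apply_eq_apply_of_bounded hGbdd z 0
  -- hence K is affine; being nonvanishing, it is constant
  have hKaff : ∀ z : ℂ, K z = K 0 + z * G 0 := by
    intro z
    have hss := sub_smul_dslope K 0 z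
    rw [← hG, sub_zero, smul_eq_mul, hGconst z] at hss
    linear_combination -hss
  have hG0 : G 0 = 0 := by
    by_contra h
    have := hKaff (-K 0 / G 0)
    rw [div_mul_cancel₀ _ h] at this
    exact hKne _ (by rw [this]; ring)
  have hKconst : ∀ z : ℂ, K z = K 0 := by
    intro z; rw [hKaff z, hG0, mul_zero, add_zero]
  -- hence g is constant, so F is affine
  have hgconst : ∀ z : ℂ, g z = g 0 := by
    intro z
    have h1 : (g z)⁻¹ = (g 0)⁻¹ := hKconst z
    exact inv_injective h1
  have hFaff : ∀ z : ℂ, F z = F 0 + z * g 0 := by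
    intro z
    have hss := sub_smul_dslope F 0 z
    rw [← hg, sub_zero, smul_eq_mul, hgconst z] at hss
    linear_combination -hss
  -- so F is surjective
  apply Set.eq_univ_of_forall
  intro u
  refine ⟨(u - F 0) / g 0, ?_⟩
  rw [hFaff, div_mul_cancel₀ _ (hgne 0)]
  ring

end Aux

/-- No harmonic metric on the plane is a subset metric of another harmonic plane:
there is no injective, orientation-preserving C¹ isometric embedding
`F : (ℂ, e^{2φ}g₀) → (ℂ, e^{2ψ}g₀)` whose range is a proper subset of ℂ. -/
theorem no_harmonic_subset_of_harmonic (φ ψ : ℂ → ℝ)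
    (hφ : IsHarmonic φ) (hφnc : ∃ z w : ℂ, φ z ≠ φ w)
    (hψ : IsHarmonic ψ) (hψnc : ∃ z w : ℂ, ψ z ≠ ψ w) :
    ¬ ∃ F : ℂ → ℂ, ContDiff ℝ 1 F ∧ Function.Injective F ∧
      (∀ z : ℂ, 0 < (fderiv ℝ F z).det) ∧
      (∀ z v : ℂ, Real.exp (ψ (F z)) * ‖fderiv ℝ F z v‖ = Real.exp (φ z) * ‖v‖) ∧
      Set.range F ≠ Set.univ := by
  rintro ⟨F, hC1, hinj, hdet, hiso, hrange⟩
  have hdiffR : Differentiable ℝ F := hC1.differentiable one_ne_zero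
  have hconf : ∀ z, ∃ c : ℝ, 0 < c ∧ ∀ v, ‖fderiv ℝ F z v‖ = c * ‖v‖ := by
    intro z
    refine ⟨Real.exp (φ z) / Real.exp (ψ (F z)), by positivity, fun v => ?_⟩
    rw [div_mul_eq_mul_div, eq_div_iff (Real.exp_ne_zero _), mul_comm ‖fderiv ℝ F z v‖]
    exact hiso z v
  obtain ⟨hF, hd⟩ := holo F hdiffR hdet hconf
  exact hrange (surj_of_inj F hF hinj hd)
end

section
/- Let φ : ℂ → ℝ be harmonic on ℂ and let ψ : D → ℝ be harmonic on the open unit disk D = {z ∈ ℂ : |z| < 1}. Then there is no bijective C¹ map F : ℂ → D with det((DF)_z) > 0 for all z and satisfying e^{ψ(F(z))}‖(DF)_z(v)‖ = e^{φ(z)}‖v‖ for all z ∈ ℂ and v ∈ ℂ. In particular, no harmonic plane is isometric to a harmonic disk. -/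
/-- `φ` is harmonic on an open set `Ω ⊆ ℂ`: smooth on `Ω` with vanishing Laplacian on `Ω`. -/
def IsHarmonicOn (φ : ℂ → ℝ) (Ω : Set ℂ) : Prop :=
  ContDiffOn ℝ (⊤ : ℕ∞) φ Ω ∧ ∀ z ∈ Ω, lap φ z = 0

set_option maxRecDepth 10000

open Complex

/-- The real determinant of a complex-linear map `ℂ → ℂ` is `normSq (m 1) ≥ 0`. -/
lemma det_restrictScalars_complex (m : ℂ →L[ℂ] ℂ) :
    ((m.restrictScalars ℝ : ℂ →L[ℝ] ℂ)).det = Complex.normSq (m 1) := by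
  have hm : ∀ x : ℂ, (m.restrictScalars ℝ) x = x * m 1 := by
    intro x
    have : m (x • (1 : ℂ)) = x • m 1 := map_smul m x 1
    simpa [smul_eq_mul] using this
  show LinearMap.det _ = _
  rw [← LinearMap.det_toMatrix basisOneI, Matrix.det_fin_two]
  simp only [LinearMap.toMatrix_apply, coe_basisOneI_repr, ContinuousLinearMap.coe_coe, hm,
    coe_basisOneI, Matrix.cons_val_zero, Matrix.cons_val_one, Matrix.head_cons,
    one_mul, mul_one]
  simp [Complex.normSq_apply, Complex.mul_re, Complex.mul_im]

/-- The real determinant of complex conjugation is `-1`. -/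
lemma det_conjCLE' : ((conjCLE : ℂ →L[ℝ] ℂ) : ℂ →L[ℝ] ℂ).det = -1 := by
  show LinearMap.det _ = _
  rw [← LinearMap.det_toMatrix basisOneI, Matrix.det_fin_two]
  simp only [LinearMap.toMatrix_apply, coe_basisOneI_repr, ContinuousLinearMap.coe_coe,
    ContinuousLinearEquiv.coe_coe, conjCLE_apply, coe_basisOneI,
    Matrix.cons_val_zero, Matrix.cons_val_one, Matrix.head_cons]
  simp

/-- No harmonic plane is isometric to a harmonic disk: there is no bijective,
orientation-preserving C¹ isometry `F : (ℂ, e^{2φ}g₀) → (D, e^{2ψ}g₀)`,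
where `D` is the open unit disk. -/
theorem no_isometry_plane_to_disk (φ : ℂ → ℝ) (ψ : ℂ → ℝ)
    (hφ : ContDiff ℝ (⊤ : ℕ∞) φ ∧ ∀ z : ℂ, lap φ z = 0)
    (hψ : IsHarmonicOn ψ (Metric.ball (0 : ℂ) 1)) :
    ¬ ∃ F : ℂ → ℂ, ContDiff ℝ 1 F ∧ Function.Injective F ∧
      Set.range F = Metric.ball (0 : ℂ) 1 ∧
      (∀ z : ℂ, 0 < (fderiv ℝ F z).det) ∧
      (∀ z v : ℂ, Real.exp (ψ (F z)) * ‖fderiv ℝ F z v‖ = Real.exp (φ z) * ‖v‖) := by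
  rintro ⟨F, hC1, hinj, hrange, hdet, hiso⟩
  have hdiffR : Differentiable ℝ F := hC1.differentiable one_ne_zero
  -- `F` is holomorphic: its derivative is conformal and orientation-preserving.
  have key : Differentiable ℂ F := by
    intro z
    set g := fderiv ℝ F z with hg
    set c := Real.exp (φ z) / Real.exp (ψ (F z)) with hc
    have hcpos : 0 < c := div_pos (Real.exp_pos _) (Real.exp_pos _)
    have hnorm : ∀ v : ℂ, ‖g v‖ = c * ‖v‖ := by
      intro v
      rw [hc, div_mul_eq_mul_div, eq_div_iff (Real.exp_ne_zero _), mul_comm (‖g v‖)]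
      exact hiso z v
    have hli : ∀ v : ℂ, ‖(c⁻¹ • (g : ℂ →ₗ[ℝ] ℂ)) v‖ = ‖v‖ := by
      intro v
      simp only [LinearMap.smul_apply, norm_smul, Real.norm_eq_abs,
        abs_of_pos (inv_pos.mpr hcpos), ContinuousLinearMap.coe_coe, hnorm]
      field_simp
    have hconf : IsConformalMap g := by
      refine ⟨c, ne_of_gt hcpos, ⟨c⁻¹ • (g : ℂ →ₗ[ℝ] ℂ), hli⟩, ?_⟩
      ext v
      show g v = c • ((c⁻¹ • (g : ℂ →ₗ[ℝ] ℂ)) v)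
      rw [LinearMap.smul_apply, smul_smul, mul_inv_cancel₀ (ne_of_gt hcpos), one_smul]
      rfl
    rcases hconf.is_complex_or_conj_linear with ⟨m, hm⟩ | ⟨m, hm⟩
    · exact (differentiableAt_iff_restrictScalars ℝ (hdiffR z)).mpr ⟨m, hm⟩
    · exfalso
      have h1 : (m.restrictScalars ℝ).det = g.det * ((conjCLE : ℂ →L[ℝ] ℂ) : ℂ →L[ℝ] ℂ).det := by
        rw [hm]
        show LinearMap.det _ = _
        rw [ContinuousLinearMap.toLinearMap_comp, LinearMap.det_comp]
      rw [det_restrictScalars_complex, det_conjCLE'] at h1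
      have h2 := hdet z
      rw [← hg] at h2
      nlinarith [Complex.normSq_nonneg (m 1)]
  -- `F` is a bounded entire function, hence constant by Liouville, contradicting injectivity.
  have hb : Bornology.IsBounded (Set.range F) := by
    rw [hrange]; exact Metric.isBounded_ball
  have := key.apply_eq_apply_of_bounded hb 0 1
  exact zero_ne_one (hinj this)
end

section
/- Let φ, ψ : ℂ → ℝ be harmonic functions and let F : ℂ → ℂ be a bijective C¹ map with det((DF)_z) > 0 for all z, satisfying e^{ψ(F(z))}‖(DF)_z(v)‖ = e^{φ(z)}‖v‖ for all z ∈ ℂ and all v ∈ ℂ (i.e., F is an orientation-preserving isometry between the harmonic planes (ℂ, e^{2φ}g₀) and (ℂ, e^{2ψ}g₀)). Then F is a complex affine transformation: there exist a, b ∈ ℂ with a ≠ 0 such that F(z) = a·z + b for all z. -/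
open Complex Filter Bornology Topology Polynomial

lemma clm_det_eq (L : ℂ →L[ℝ] ℂ) :
    L.det = (L 1).re * (L I).im - (L I).re * (L 1).im := by
  have : L.det = LinearMap.det (L : ℂ →ₗ[ℝ] ℂ) := rfl
  rw [this, ← LinearMap.det_toMatrix Complex.basisOneI, Matrix.det_fin_two]
  simp [LinearMap.toMatrix_apply, Complex.coe_basisOneI, Complex.coe_basisOneI_repr]

lemma norm_sq_re_im (z : ℂ) : ‖z‖ ^ 2 = z.re ^ 2 + z.im ^ 2 := by
  rw [Complex.sq_norm, Complex.normSq_apply]; ring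

lemma conformal_is_mul (L : ℂ →L[ℝ] ℂ) (c : ℝ) (hc : 0 < c)
    (h : ∀ v : ℂ, ‖L v‖ = c * ‖v‖) (hdet : 0 < L.det) :
    ∀ v : ℂ, L v = L 1 * v := by
  set a := L 1 with ha
  set b := L I with hb
  have sq : ∀ v : ℂ, (L v).re ^ 2 + (L v).im ^ 2 = c ^ 2 * (v.re ^ 2 + v.im ^ 2) := by
    intro v
    rw [← norm_sq_re_im, ← norm_sq_re_im, h v]; ring
  have e1 : a.re ^ 2 + a.im ^ 2 = c ^ 2 := by
    simpa using sq 1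
  have e2 : b.re ^ 2 + b.im ^ 2 = c ^ 2 := by
    simpa using sq I
  have e3 : (a.re + b.re) ^ 2 + (a.im + b.im) ^ 2 = c ^ 2 * 2 := by
    have h3 := sq (1 + I)
    rw [map_add] at h3
    norm_num at h3
    linarith [h3]
  have eorth : a.re * b.re + a.im * b.im = 0 := by
    linear_combination (e3 - e1 - e2) / 2
  have hdet' : a.re * b.im - b.re * a.im = L.det := (clm_det_eq L).symm
  have hdetsq : (a.re * b.im - b.re * a.im) ^ 2 = c ^ 2 * c ^ 2 := by
    nlinarith [e1, e2, eorth]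
  have hdpos : 0 < a.re * b.im - b.re * a.im := hdet' ▸ hdet
  have hdc : a.re * b.im - b.re * a.im = c ^ 2 := by
    have hfac : (a.re * b.im - b.re * a.im - c ^ 2) * (a.re * b.im - b.re * a.im + c ^ 2) = 0 := by
      nlinarith [hdetsq]
    rcases mul_eq_zero.mp hfac with h' | h'
    · linarith
    · nlinarith [sq_nonneg c]
  have hbia : b = I * a := by
    have h0 : (b.re + a.im) ^ 2 + (b.im - a.re) ^ 2 = 0 := by linear_combination e1 + e2 - 2 * hdc
    have h1 : b.re + a.im = 0 := by
      have hz : (b.re + a.im) ^ 2 = 0 :=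
        le_antisymm (by linarith [sq_nonneg (b.im - a.re)]) (sq_nonneg _)
      exact pow_eq_zero_iff two_ne_zero |>.mp hz
    have h2 : b.im - a.re = 0 := by
      have hz : (b.im - a.re) ^ 2 = 0 :=
        le_antisymm (by linarith [sq_nonneg (b.re + a.im)]) (sq_nonneg _)
      exact pow_eq_zero_iff two_ne_zero |>.mp hz
    apply Complex.ext
    · simp only [Complex.mul_re, Complex.I_re, Complex.I_im]
      linarith
    · simp only [Complex.mul_im, Complex.I_re, Complex.I_im]
      linarith
  intro v
  have hv : v = v.re • (1 : ℂ) + v.im • I := by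
    rw [Complex.real_smul, Complex.real_smul, mul_one, Complex.re_add_im]
  calc L v = L (v.re • (1 : ℂ) + v.im • I) := by rw [← hv]
    _ = v.re • a + v.im • b := by rw [map_add, map_smul, map_smul]
    _ = a * v := by
        rw [hbia, Complex.real_smul, Complex.real_smul]
        conv_rhs => rw [← Complex.re_add_im v]
        ring


lemma entire_growth_poly : ∀ (n : ℕ) (f : ℂ → ℂ), Differentiable ℂ f →
    ∀ C R : ℝ, (∀ z : ℂ, R ≤ ‖z‖ → ‖f z‖ ≤ C * ‖z‖ ^ n) →
    ∃ p : Polynomial ℂ, ∀ z, f z = p.eval z := by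
  intro n
  induction n with
  | zero =>
    intro f hf C R hg
    have hb : Bornology.IsBounded (Set.range f) := by
      obtain ⟨M, hM⟩ := (isCompact_closedBall (0:ℂ) R).exists_bound_of_continuousOn
        hf.continuous.continuousOn
      apply isBounded_iff_forall_norm_le.mpr
      refine ⟨max M C, ?_⟩
      rintro y ⟨z, rfl⟩
      rcases le_total ‖z‖ R with h | h
      · exact le_trans (hM z (by simpa [Metric.mem_closedBall] using h)) (le_max_left _ _)
      · have := hg z h
        simp only [pow_zero, mul_one] at this
        exact this.trans (le_max_right _ _)
    obtain ⟨c, hc⟩ := hf.exists_const_forall_eq_of_bounded hb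
    exact ⟨Polynomial.C c, fun z => by simp [← hc z]⟩
  | succ n ih =>
    intro f hf C R hg
    set f₁ : ℂ → ℂ := dslope f 0 with hf₁
    have hdiff₁ : Differentiable ℂ f₁ := by
      rw [← differentiableOn_univ]
      exact (Complex.differentiableOn_dslope (by simp : Set.univ ∈ nhds (0:ℂ))).mpr
        hf.differentiableOn
    have hg₁ : ∀ z : ℂ, max R 1 ≤ ‖z‖ → ‖f₁ z‖ ≤ (max C 0 + ‖f 0‖) * ‖z‖ ^ n := by
      intro z hz
      have hz1 : (1:ℝ) ≤ ‖z‖ := le_trans (le_max_right _ _) hz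
      have hzR : R ≤ ‖z‖ := le_trans (le_max_left _ _) hz
      have hzne : z ≠ 0 := by
        intro h; rw [h, norm_zero] at hz1; linarith
      have hval : f₁ z = (f z - f 0) / z := by
        rw [hf₁, dslope_of_ne f hzne, slope_def_field, sub_zero]
      rw [hval, norm_div]
      rw [div_le_iff₀ (by positivity)]
      have h1 : ‖f z - f 0‖ ≤ ‖f z‖ + ‖f 0‖ := norm_sub_le _ _
      have h2 : ‖f z‖ ≤ C * ‖z‖ ^ (n+1) := hg z hzR
      have h3 : C * ‖z‖ ^ (n+1) ≤ max C 0 * ‖z‖ ^ (n+1) := by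
        apply mul_le_mul_of_nonneg_right (le_max_left _ _) (by positivity)
      have h4 : ‖f 0‖ * 1 ≤ ‖f 0‖ * (‖z‖ ^ n * ‖z‖) := by
        apply mul_le_mul_of_nonneg_left _ (norm_nonneg _)
        calc (1:ℝ) = 1 * 1 := by ring
          _ ≤ ‖z‖ ^ n * ‖z‖ := by
              apply mul_le_mul (one_le_pow₀ hz1) hz1 zero_le_one (by positivity)
      calc ‖f z - f 0‖ ≤ max C 0 * ‖z‖ ^ (n+1) + ‖f 0‖ := by linarith
        _ ≤ (max C 0 + ‖f 0‖) * ‖z‖ ^ n * ‖z‖ := by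
            rw [pow_succ] at *
            nlinarith [h4]
    obtain ⟨p, hp⟩ := ih f₁ hdiff₁ (max C 0 + ‖f 0‖) (max R 1) hg₁
    refine ⟨Polynomial.C (f 0) + Polynomial.X * p, fun z => ?_⟩
    have : z • f₁ z = f z - f 0 := by
      simpa [sub_zero] using sub_smul_dslope f 0 z
    simp only [eval_add, eval_C, eval_mul, eval_X, ← hp z]
    rw [smul_eq_mul] at this
    linear_combination -this


lemma proper_growth (F : ℂ → ℂ) (hdiff : Differentiable ℂ F)
    (hbij : Function.Bijective F) :
    ∃ (n : ℕ) (C R : ℝ), ∀ z : ℂ, R ≤ ‖z‖ → ‖F z‖ ≤ C * ‖z‖ ^ n := by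
  -- F is an open map
  have hopen : IsOpenMap F := by
    rw [isOpenMap_iff_nhds_le]
    intro z₀
    rcases (hdiff.analyticAt z₀).eventually_constant_or_nhds_le_map_nhds with hconst | hle
    · exfalso
      have h1 : ∀ᶠ z in 𝓝[≠] z₀, F z = F z₀ := hconst.filter_mono nhdsWithin_le_nhds
      have h2 : ∀ᶠ z in 𝓝[≠] z₀, z ∈ ({z₀}ᶜ : Set ℂ) := self_mem_nhdsWithin
      obtain ⟨z, hFz, hz⟩ := (h1.and h2).exists
      exact hz (hbij.injective hFz)
    · exact hle
  have hP : Tendsto F (cobounded ℂ) (cobounded ℂ) := by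
    rw [Metric.cobounded_eq_cocompact]
    exact (Equiv.toHomeomorphOfContinuousOpen (Equiv.ofBijective F hbij)
      hdiff.continuous hopen).isClosedEmbedding.tendsto_cocompact
  set g : ℂ → ℂ := fun w => if w = 0 then 0 else (F w⁻¹)⁻¹ with hg
  have htend : Tendsto (fun w => (F w⁻¹)⁻¹) (𝓝[≠] (0:ℂ)) (𝓝[≠] (0:ℂ)) :=
    (tendsto_inv₀_cobounded'.comp (hP.comp tendsto_inv₀_nhdsNE_zero))
  have hgeq : ∀ᶠ w in 𝓝[≠] (0:ℂ), g w = (F w⁻¹)⁻¹ := by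
    have h2 : ∀ᶠ w in 𝓝[≠] (0:ℂ), w ∈ ({(0:ℂ)}ᶜ : Set ℂ) := self_mem_nhdsWithin
    filter_upwards [h2] with w hw
    have hwne : w ≠ 0 := hw
    simp [hg, if_neg hwne]
  have htendg : Tendsto g (𝓝[≠] (0:ℂ)) (𝓝[≠] (0:ℂ)) := htend.congr' (EventuallyEq.symm hgeq)
  have hFne : ∀ᶠ w in 𝓝[≠] (0:ℂ), F w⁻¹ ≠ 0 := by
    have h1 : ∀ᶠ w in 𝓝[≠] (0:ℂ), (F w⁻¹)⁻¹ ∈ ({(0:ℂ)}ᶜ : Set ℂ) :=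
      htend.eventually self_mem_nhdsWithin
    filter_upwards [h1] with w hw
    intro h0
    apply hw
    simp [h0]
  have hgdiff : ∀ᶠ w in 𝓝[≠] (0:ℂ), DifferentiableAt ℂ g w := by
    have h2 : ∀ᶠ w in 𝓝[≠] (0:ℂ), w ∈ ({(0:ℂ)}ᶜ : Set ℂ) := self_mem_nhdsWithin
    filter_upwards [hFne, h2] with w hFw hw
    have hwne : w ≠ 0 := hw
    have heq : ∀ᶠ u in 𝓝 w, g u = (F u⁻¹)⁻¹ := by
      filter_upwards [isOpen_ne.mem_nhds hwne] with u (hu : u ≠ 0)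
      simp [hg, if_neg hu]
    exact DifferentiableAt.congr_of_eventuallyEq
      (((hdiff _).comp w (differentiableAt_inv hwne)).inv hFw) heq
  have hgcont : ContinuousAt g 0 := by
    have h0 : g 0 = 0 := by simp [hg]
    have hp : Tendsto g (pure 0) (𝓝 (0:ℂ)) := by
      have := tendsto_pure_nhds g 0
      rwa [h0] at this
    have hs : Tendsto g (𝓝[≠] (0:ℂ) ⊔ pure 0) (𝓝 (0:ℂ)) :=
      tendsto_sup.mpr ⟨htendg.mono_right nhdsWithin_le_nhds, hp⟩
    rw [nhdsNE_sup_pure] at hs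
    rw [ContinuousAt, h0]
    exact hs
  have hganal : AnalyticAt ℂ g 0 :=
    Complex.analyticAt_of_differentiable_on_punctured_nhds_of_continuousAt hgdiff hgcont
  have hgne : ∀ᶠ w in 𝓝[≠] (0:ℂ), g w ≠ 0 := by
    have h1 : ∀ᶠ w in 𝓝[≠] (0:ℂ), g w ∈ ({(0:ℂ)}ᶜ : Set ℂ) :=
      htendg.eventually self_mem_nhdsWithin
    filter_upwards [h1] with w hw
    exact hw
  have hordne : analyticOrderAt g 0 ≠ ⊤ := by
    intro htop
    have h := analyticOrderAt_eq_top.mp htop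
    obtain ⟨w, h1, h2⟩ := ((h.filter_mono nhdsWithin_le_nhds).and hgne).exists
    exact h2 h1
  obtain ⟨n, hn⟩ : ∃ n : ℕ, analyticOrderAt g 0 = (n : ℕ∞) := by
    obtain ⟨n, hn⟩ := WithTop.ne_top_iff_exists.mp hordne
    exact ⟨n, hn.symm⟩
  obtain ⟨h, hanalh, hh0, hgh⟩ := hganal.analyticOrderAt_eq_natCast.mp hn
  set ε := ‖h 0‖ with hε
  have εpos : 0 < ε := norm_pos_iff.mpr hh0
  have hlow : ∀ᶠ w in 𝓝 (0:ℂ), ε / 2 ≤ ‖h w‖ := by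
    have hcont : Tendsto (fun w => ‖h w‖) (𝓝 0) (𝓝 ε) :=
      (continuous_norm.tendsto _).comp hanalh.continuousAt
    exact hcont.eventually (eventually_ge_nhds (by linarith))
  have hev : ∀ᶠ w in 𝓝[≠] (0:ℂ), ε / 2 * ‖w‖ ^ n ≤ ‖g w‖ ∧ g w = (F w⁻¹)⁻¹ := by
    filter_upwards [hgh.filter_mono nhdsWithin_le_nhds, hlow.filter_mono nhdsWithin_le_nhds,
      hgeq] with w h1 h2 h3
    refine ⟨?_, h3⟩
    rw [h1, sub_zero, smul_eq_mul, norm_mul, norm_pow]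
    have : 0 ≤ ‖w‖ ^ n := by positivity
    nlinarith [norm_nonneg w]
  rw [eventually_nhdsWithin_iff, Metric.eventually_nhds_iff] at hev
  obtain ⟨δ, δpos, hδ⟩ := hev
  refine ⟨n, (ε / 2)⁻¹, δ⁻¹ + 1, fun z hz => ?_⟩
  have hδinv : 0 < δ⁻¹ := by positivity
  have hzpos : 0 < ‖z‖ := by linarith
  have hzne : z ≠ 0 := by
    intro h; rw [h, norm_zero] at hzpos; exact lt_irrefl _ hzpos
  have hwlt : ‖z‖⁻¹ < δ := by
    have h1 : δ⁻¹ < ‖z‖ := by linarith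
    have := mul_inv_cancel₀ (ne_of_gt δpos)
    have := mul_inv_cancel₀ (ne_of_gt hzpos)
    nlinarith [mul_pos hzpos δpos]
  have hw := hδ (show dist z⁻¹ (0:ℂ) < δ by rw [dist_zero_right, norm_inv]; exact hwlt)
    (by simp [inv_ne_zero hzne])
  obtain ⟨hw1, hw2⟩ := hw
  rw [inv_inv] at hw2
  have hB : (0:ℝ) < ε / 2 * ‖z⁻¹‖ ^ n := by
    have : (0:ℝ) < ‖z⁻¹‖ := by simpa using inv_ne_zero hzne
    positivity
  have h4 : ε / 2 * ‖z⁻¹‖ ^ n ≤ ‖F z‖⁻¹ := by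
    rw [← norm_inv, ← hw2]
    exact hw1
  have h5 : ‖F z‖ ≤ (ε / 2 * ‖z⁻¹‖ ^ n)⁻¹ := by
    rw [← inv_inv ‖F z‖]
    exact inv_anti₀ hB h4
  calc ‖F z‖ ≤ (ε / 2 * ‖z⁻¹‖ ^ n)⁻¹ := h5
    _ = (ε / 2)⁻¹ * ‖z‖ ^ n := by rw [norm_inv, mul_inv, inv_pow, inv_inv]


/-- Every orientation-preserving isometry between harmonic planes is a complex
affine transformation `z ↦ a·z + b` with `a ≠ 0`. -/
theorem isometry_harmonic_planes_affine (φ ψ : ℂ → ℝ)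
    (hφ : IsHarmonic φ) (hψ : IsHarmonic ψ)
    (F : ℂ → ℂ) (hF : ContDiff ℝ 1 F) (hbij : Function.Bijective F)
    (hor : ∀ z : ℂ, 0 < (fderiv ℝ F z).det)
    (hiso : ∀ z v : ℂ, Real.exp (ψ (F z)) * ‖fderiv ℝ F z v‖ = Real.exp (φ z) * ‖v‖) :
    ∃ a b : ℂ, a ≠ 0 ∧ ∀ z : ℂ, F z = a * z + b := by
  have hdiffR : Differentiable ℝ F := hF.differentiable one_ne_zero
  have key : ∀ z : ℂ, HasDerivAt F (fderiv ℝ F z 1) z ∧ fderiv ℝ F z 1 ≠ 0 := by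
    intro z
    set L := fderiv ℝ F z with hL
    set c : ℝ := Real.exp (φ z) / Real.exp (ψ (F z)) with hc
    have hcpos : 0 < c := div_pos (Real.exp_pos _) (Real.exp_pos _)
    have hnorm : ∀ v : ℂ, ‖L v‖ = c * ‖v‖ := by
      intro v
      have h2 : Real.exp (ψ (F z)) ≠ 0 := Real.exp_ne_zero _
      rw [hc, div_mul_eq_mul_div, eq_div_iff h2]
      linarith [hiso z v]
    have hmul := conformal_is_mul L c hcpos hnorm (hor z)
    set a := L 1 with ha
    have hane : a ≠ 0 := by
      have h1 := hnorm 1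
      rw [← ha] at h1
      simp only [norm_one, mul_one] at h1
      intro h0
      rw [h0, norm_zero] at h1
      exact hcpos.ne h1
    have hfd : HasFDerivAt F L z := hdiffR.differentiableAt.hasFDerivAt
    have hfd' : HasFDerivAt F (a • (1 : ℂ →L[ℂ] ℂ)) z := by
      apply hasFDerivAt_of_restrictScalars ℝ hfd
      ext v
      simp [hmul v, mul_comm]
    have := hfd'.hasDerivAt
    simp only [ContinuousLinearMap.smul_apply, ContinuousLinearMap.one_apply, smul_eq_mul,
      mul_one] at this
    exact ⟨this, hane⟩
  have hdiffC : Differentiable ℂ F := fun z => ((key z).1).differentiableAt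
  have hderiv_ne : ∀ z : ℂ, deriv F z ≠ 0 := by
    intro z
    rw [(key z).1.deriv]
    exact (key z).2
  obtain ⟨n, C, R, hgrow⟩ := proper_growth F hdiffC hbij
  obtain ⟨p, hp⟩ := entire_growth_poly n F hdiffC C R hgrow
  have hFp : F = fun z => p.eval z := funext hp
  have hde : ∀ z : ℂ, deriv F z = p.derivative.eval z := by
    intro z
    rw [hFp]
    exact Polynomial.deriv (p := p)
  have hnoroot : ¬ 0 < p.derivative.degree := by
    intro hd
    obtain ⟨z, hz⟩ := Complex.exists_root hd
    exact hderiv_ne z (by rw [hde z]; exact hz)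
  have hdc : p.derivative = Polynomial.C (p.derivative.coeff 0) :=
    Polynomial.eq_C_of_degree_le_zero (not_lt.mp hnoroot)
  set a : ℂ := p.derivative.coeff 0 with haa
  have hderiv_const : ∀ z : ℂ, deriv F z = a := by
    intro z
    rw [hde z, hdc]
    simp
  have hane : a ≠ 0 := by
    rw [← hderiv_const 0]
    exact hderiv_ne 0
  refine ⟨a, F 0, hane, fun z => ?_⟩
  have hG : ∀ w : ℂ, HasDerivAt (fun u => F u - a * u) 0 w := by
    intro w
    have h1 : HasDerivAt (fun u : ℂ => a * u) a w := by
      simpa using (hasDerivAt_id w).const_mul a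
    have h2 : HasDerivAt F a w := by
      have := (key w).1
      rwa [← (key w).1.deriv, hderiv_const w] at this
    have h3 : HasDerivAt (fun u => F u - a * u) (a - a) w := h2.sub h1
    rwa [sub_self] at h3
  have hGdiff : Differentiable ℂ (fun u => F u - a * u) := fun w => (hG w).differentiableAt
  have hGconst := is_const_of_deriv_eq_zero hGdiff (fun w => (hG w).deriv) z 0
  simp only [mul_zero, sub_zero] at hGconst
  linear_combination hGconst
end

section
/- Every injective entire function is complex affine: if f : ℂ → ℂ is holomorphic on all of ℂ and injective, then there exist a, b ∈ ℂ with a ≠ 0 such that f(z) = a·z + b for all z ∈ ℂ. -/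
/-!
An injective entire function `f` is an open map, so `f` stays a positive distance away from `f 0`
outside the unit disc, and `(f z - f 0)⁻¹` has a removable singularity at infinity. A nonzero
limit there would make `f` bounded, hence constant by Liouville; so the limit is `0`, and the
resulting `O(1/z)` rate says that `|f z|` grows at least linearly. Thus `f` is proper, hence
surjective, hence a homeomorphism of `ℂ`. Its inverse is continuous and holomorphic off the
countable set of critical values of `f`, hence entire, and it grows at most linearly, so it is
affine by Liouville applied to its difference quotient at `0`.
-/

open Set Filter Function Topology Asymptotics Bornology Metric

theorem IsOpenMap.exists_pos_le_dist_of_injective {X Y : Type*} [PseudoMetricSpace X]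
    [PseudoMetricSpace Y] {f : X → Y} (hf : IsOpenMap f) (hinj : Injective f) (x : X) {ε : ℝ}
    (hε : 0 < ε) : ∃ r > 0, ∀ y, ε ≤ dist y x → r ≤ dist (f y) (f x) := by
  obtain ⟨r, hr, hball⟩ := Metric.isOpen_iff.mp (hf _ isOpen_ball) (f x)
    (mem_image_of_mem f (mem_ball_self hε))
  refine ⟨r, hr, fun y hy => not_lt.mp fun hlt => ?_⟩
  obtain ⟨y', hy', hfy⟩ := hball (mem_ball.mpr hlt)
  rw [hinj hfy, mem_ball] at hy'
  exact hy'.not_ge hy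

theorem IsOpenMap.surjective_of_tendsto_cocompact {X Y : Type*} [TopologicalSpace X]
    [TopologicalSpace Y] [Nonempty X] [PreconnectedSpace Y] [T2Space Y] [CompactlyCoherentSpace Y]
    {f : X → Y} (ho : IsOpenMap f) (hc : Continuous f)
    (hp : Tendsto f (cocompact X) (cocompact Y)) : Surjective f := by
  have hcl : IsClosed (range f) :=
    (isProperMap_iff_tendsto_cocompact.2 ⟨hc, hp⟩).isClosedMap.isClosed_range
  exact range_eq_univ.1 (IsClopen.eq_univ ⟨hcl, ho.isOpen_range⟩ (range_nonempty f))

theorem Differentiable.not_tendsto_nhds_of_injective {E F : Type*} [NormedAddCommGroup E]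
    [NormedSpace ℂ E] [Nontrivial E] [NormedAddCommGroup F] [NormedSpace ℂ F] {f : E → F}
    (hf : Differentiable ℂ f) (hinj : Injective f) (c : F) : ¬Tendsto f (cocompact E) (𝓝 c) :=
  fun h =>
    have ⟨x, y, hxy⟩ := exists_pair_ne E
    hxy (hinj ((hf.apply_eq_of_tendsto_cocompact x h).trans
      (hf.apply_eq_of_tendsto_cocompact y h).symm))

section

variable {E : Type*} [NormedAddCommGroup E] [NormedSpace ℂ E] [CompleteSpace E]

namespace Complex

theorem exists_tendsto_and_isBigO_of_differentiable_on_punctured_nhds {h : ℂ → E} {c : ℂ}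
    (hd : ∀ᶠ z in 𝓝[≠] c, DifferentiableAt ℂ h z)
    (hb : IsBoundedUnder (· ≤ ·) (𝓝[≠] c) (norm ∘ h)) :
    ∃ L, Tendsto h (𝓝[≠] c) (𝓝 L) ∧
      (fun z => h z - L) =O[𝓝[≠] c] fun z => z - c := by
  rw [eventually_nhdsWithin_iff] at hd
  have hdiff : DifferentiableOn ℂ h ({z | z ≠ c → DifferentiableAt ℂ h z} \ {c}) :=
    fun z hz => (hz.1 hz.2).differentiableWithinAt
  set G := update h c (limUnder (𝓝[≠] c) h)
  have hG : DifferentiableAt ℂ G c :=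
    (differentiableOn_update_limUnder_of_isLittleO hd hdiff <| hb.isLittleO_sub_self_inv.sub
      (isBoundedUnder_const (l := 𝓝[≠] c) (a := ‖h c‖)).isLittleO_sub_self_inv)
      |>.differentiableAt hd
  have hGh : G =ᶠ[𝓝[≠] c] h :=
    eventually_nhdsWithin_of_forall fun z hz => update_of_ne hz _ _
  refine ⟨G c, (continuousAt_update_same.1 hG.continuousAt).trans ?_, ?_⟩
  · simp [G]
  · exact (hG.isBigO_sub.mono nhdsWithin_le_nhds).congr' (hGh.sub .rfl) .rfl

theorem exists_tendsto_and_isBigO_inv_of_differentiable_cobounded {h : ℂ → E}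
    (hd : ∀ᶠ z in cobounded ℂ, DifferentiableAt ℂ h z)
    (hb : IsBoundedUnder (· ≤ ·) (cobounded ℂ) (norm ∘ h)) :
    ∃ L, Tendsto h (cobounded ℂ) (𝓝 L) ∧
      (fun z => h z - L) =O[cobounded ℂ] fun z => z⁻¹ := by
  have hd' : ∀ᶠ z in 𝓝[≠] 0, DifferentiableAt ℂ (fun z => h z⁻¹) z := by
    filter_upwards [tendsto_inv₀_nhdsNE_zero.eventually hd, self_mem_nhdsWithin] with z hz hz0
    exact hz.comp z (differentiableAt_inv hz0)
  obtain ⟨L, hL, hO⟩ := exists_tendsto_and_isBigO_of_differentiable_on_punctured_nhds hd'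
    (tendsto_inv₀_nhdsNE_zero.isBoundedUnder_comp hb)
  refine ⟨L, by simpa [comp_def] using hL.comp tendsto_inv₀_cobounded', ?_⟩
  simpa [comp_def] using hO.comp_tendsto tendsto_inv₀_cobounded'

end Complex

theorem Differentiable.countable_setOf_eq_zero {F : ℂ → E} (hF : Differentiable ℂ F)
    (hne : F ≠ 0) : {z | F z = 0}.Countable := by
  have hcod := (Complex.analyticOnNhd_univ_iff_differentiable.2 hF
    |>.eqOn_zero_or_eventually_ne_zero_of_preconnected isPreconnected_univ).resolve_left
      fun h => hne (funext fun z => h trivial)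
  simpa using (HereditarilyLindelofSpace.isLindelof _).countable_of_isDiscrete
    (isDiscrete_of_codiscreteWithin (s := {z | F z = 0}) hcod)

theorem Differentiable.exists_eq_smul_add_of_isBigO_id {g : ℂ → E} (hg : Differentiable ℂ g)
    (hO : g =O[cobounded ℂ] id) : ∃ a b : E, ∀ z, g z = z • a + b := by
  have hq : Differentiable ℂ (dslope g 0) := by
    rw [← differentiableOn_univ, Complex.differentiableOn_dslope univ_mem]
    exact hg.differentiableOn
  have hqO : dslope g 0 =O[cocompact ℂ] (1 : ℂ → ℝ) := by
    rw [← cobounded_eq_cocompact]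
    have : (fun z => z⁻¹ • (g z - g 0)) =O[cobounded ℂ] fun z => z⁻¹ • z :=
      (isBigO_refl _ _).smul (hO.sub (isLittleO_const_id_cobounded _).isBigO)
    refine (this.congr' ?_ ?_).trans (isBigO_const_const (1 : ℂ) one_ne_zero _) <;>
      filter_upwards [eventually_ne_cobounded 0] with z hz
    · rw [dslope_of_ne _ hz, slope_def_module, sub_zero]
    · exact inv_mul_cancel₀ hz
  obtain ⟨a, ha⟩ :=
    hq.exists_const_forall_eq_of_bounded (hq.continuous.isBounded_range_iff_isBigO.2 hqO)
  refine ⟨a, g 0, fun z => ?_⟩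
  have := sub_smul_dslope g 0 z
  rw [sub_zero, ha] at this
  exact eq_add_of_sub_eq this.symm

end

namespace Differentiable

variable {f : ℂ → ℂ}

theorem isOpenMap_of_injective (hf : Differentiable ℂ f) (hinj : Injective f) : IsOpenMap f :=
  (Complex.analyticOnNhd_univ_iff_differentiable.2 hf).is_constant_or_isOpenMap.resolve_left
    fun ⟨_, hw⟩ => zero_ne_one (hinj ((hw 0).trans (hw 1).symm))

theorem isBoundedUnder_inv_sub_of_injective (hf : Differentiable ℂ f) (hinj : Injective f)
    (x : ℂ) : IsBoundedUnder (· ≤ ·) (cobounded ℂ) fun z => ‖(f z - f x)⁻¹‖ := by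
  obtain ⟨r, hr, hfar⟩ :=
    (hf.isOpenMap_of_injective hinj).exists_pos_le_dist_of_injective hinj x one_pos
  refine ⟨r⁻¹, eventually_map.2 ?_⟩
  filter_upwards [isBounded_def.1 (isBounded_ball (x := x) (r := 1))] with z hz
  simpa [← dist_eq_norm] using inv_anti₀ hr (hfar z (not_lt.1 hz))

theorem isBigO_id_sub_of_injective (hf : Differentiable ℂ f) (hinj : Injective f) (x : ℂ) :
    (fun z => z) =O[cobounded ℂ] fun z => f z - f x := by
  have hne : ∀ᶠ z in cobounded ℂ, f z - f x ≠ 0 := by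
    filter_upwards [eventually_ne_cobounded x] with z hz using sub_ne_zero.2 (hinj.ne hz)
  have hd : ∀ᶠ z in cobounded ℂ, DifferentiableAt ℂ (fun z => (f z - f x)⁻¹) z := by
    filter_upwards [hne] with z hz using ((hf z).sub_const _).inv hz
  obtain ⟨L, hL, hO⟩ := Complex.exists_tendsto_and_isBigO_inv_of_differentiable_cobounded hd
    (hf.isBoundedUnder_inv_sub_of_injective hinj x)
  obtain rfl : L = 0 := by
    by_contra hL0
    refine hf.not_tendsto_nhds_of_injective hinj (f x + L⁻¹) ?_
    rw [← cobounded_eq_cocompact]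
    refine ((hL.inv₀ hL0).const_add (f x)).congr' ?_
    filter_upwards [hne] with z hz
    simp
  simp only [sub_zero] at hO
  simpa using hO.inv_rev (by filter_upwards [hne] with z hz h0 using absurd (inv_eq_zero.1 h0) hz)

theorem tendsto_cocompact_of_injective (hf : Differentiable ℂ f) (hinj : Injective f) :
    Tendsto f (cocompact ℂ) (cocompact ℂ) := by
  have hsub := tendsto_norm_atTop_iff_cobounded.1
    ((hf.isBigO_id_sub_of_injective hinj 0).trans_tendsto_norm_atTop tendsto_norm_cobounded_atTop)
  rw [← cobounded_eq_cocompact]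
  simpa [comp_def] using (tendsto_add_const_cobounded (f 0)).comp hsub

theorem differentiable_of_rightInverse {g : ℂ → ℂ} (hf : Differentiable ℂ f)
    (hg : Continuous g) (hfg : RightInverse g f) : Differentiable ℂ g := by
  have hcrit : (f '' {z | _root_.deriv f z = 0}).Countable := by
    refine (hf.deriv.countable_setOf_eq_zero fun h0 => ?_).image f
    have := is_const_of_deriv_eq_zero hf (congrFun h0) (g 0) (g 1)
    simp [hfg 0, hfg 1] at this
  have hoff : ∀ η ∉ f '' {z | _root_.deriv f z = 0}, DifferentiableAt ℂ g η := fun η hη =>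
    (HasDerivAt.of_local_left_inverse hg.continuousAt (hf (g η)).hasDerivAt
      (fun h0 => hη ⟨g η, h0, hfg η⟩) (.of_forall hfg)).differentiableAt
  exact fun η => (Complex.hasFPowerSeriesOnBall_of_differentiable_off_countable (c := η) hcrit
    hg.continuousOn (fun z hz => hoff z hz.2) one_pos).analyticAt.differentiableAt

end Differentiable

/-- Every injective entire function is complex affine: `f(z) = a·z + b` with `a ≠ 0`. -/
theorem injective_entire_is_affine (f : ℂ → ℂ)
    (hf : ∀ z : ℂ, DifferentiableAt ℂ f z) (hinj : Function.Injective f) :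
    ∃ a b : ℂ, a ≠ 0 ∧ ∀ z : ℂ, f z = a * z + b := by
  have hdf : Differentiable ℂ f := hf
  have hopen := hdf.isOpenMap_of_injective hinj
  have hsurj := hopen.surjective_of_tendsto_cocompact hdf.continuous
    (hdf.tendsto_cocompact_of_injective hinj)
  let e : ℂ ≃ₜ ℂ :=
    (Equiv.ofBijective f ⟨hinj, hsurj⟩).toHomeomorphOfContinuousOpen hdf.continuous hopen
  have hfe : RightInverse e.symm f := e.apply_symm_apply
  have hgrowth : e.symm =O[cobounded ℂ] id := by
    refine ((hdf.isBigO_id_sub_of_injective hinj 0).comp_tendsto ?_).trans ?_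
    · rw [cobounded_eq_cocompact]
      exact e.symm.map_cocompact.le
    · simpa [comp_def, hfe _] using
        (isBigO_refl id _).sub (isLittleO_const_id_cobounded (f 0)).isBigO
  obtain ⟨a, b, hab⟩ := (hdf.differentiable_of_rightInverse e.symm.continuous hfe)
    |>.exists_eq_smul_add_of_isBigO_id hgrowth
  have ha : a ≠ 0 := by
    rintro rfl
    simpa using e.symm.injective (show e.symm 0 = e.symm 1 by simp [hab])
  refine ⟨a⁻¹, -(a⁻¹ * b), inv_ne_zero ha, fun z => ?_⟩
  have := hab (f z)
  rw [show e.symm (f z) = z from e.symm_apply_apply z, smul_eq_mul] at this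
  field_simp
  linear_combination -this
end

section
/- The improper integral I = ∫₀¹ exp(∑_{k=0}^∞ r^{k!}) dr converges: the function r ↦ exp(∑_{k=0}^∞ r^{k!}) is integrable on the interval (0, 1). -/
/-!
Write `S(r) = ∑ r^{k!}` and `ε = 1 - r`, and let `n` be such that `n! < 1/ε ≤ (n+1)!`.
Then `r^{(n+1)!} ≤ e^{-ε (n+1)!} ≤ 1/2`, and since `(n+1+k)! ≥ (k+1) (n+1)!` the terms from
index `n+1` on are dominated by the geometric series `∑ 2^{-(k+1)} = 1`; the first `n+1` terms
are at most `1` each. Hence `S(r) ≤ n + 2`, and `e^{2(n+2)} ε ≤ e^4 (e^2)^n / n! ≤ e^{4 + e^2}`.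
So `exp S(r) = O((1-r)^{-1/2})`, which is integrable on `(0,1)`.
-/

open MeasureTheory Real
open scoped Nat

lemma summable_pow_factorial {r : ℝ} (h0 : 0 ≤ r) (h1 : r < 1) :
    Summable fun k : ℕ => r ^ k ! :=
  (summable_geometric_of_lt_one h0 h1).of_nonneg_of_le (fun _ => by positivity)
    fun k => pow_le_pow_of_le_one h0 h1.le (Nat.self_le_factorial k)

lemma pow_factorial_add_le {r : ℝ} (h0 : 0 ≤ r) (h1 : r ≤ 1) {N : ℕ} (hN : 1 ≤ N) (k : ℕ) :
    r ^ (k + N)! ≤ (r ^ N !) ^ (k + 1) := by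
  have hfac : N ! * (k + 1) ≤ (k + N)! :=
    calc N ! * (k + 1) ≤ N ! * (N + 1) ^ k := by
          gcongr
          calc k + 1 ≤ 2 ^ k := Nat.lt_two_pow_self
            _ ≤ (N + 1) ^ k := by gcongr; omega
      _ ≤ (N + k)! := Nat.factorial_mul_pow_le_factorial
      _ = (k + N)! := by rw [Nat.add_comm]
  rw [← pow_mul]
  exact pow_le_pow_of_le_one h0 h1 hfac

lemma tsum_pow_factorial_le {r : ℝ} (h0 : 0 ≤ r) (h1 : r < 1) {N : ℕ} (hN : 1 ≤ N)
    (hhalf : r ^ N ! ≤ 1 / 2) : ∑' k : ℕ, r ^ k ! ≤ N + 1 := by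
  have hsum := summable_pow_factorial h0 h1
  have hhead : ∑ k ∈ Finset.range N, r ^ k ! ≤ N := by
    simpa using Finset.sum_le_card_nsmul (Finset.range N) _ 1 fun k _ => pow_le_one₀ h0 h1.le
  have hgeom : HasSum (fun k : ℕ => ((1 : ℝ) / 2) ^ (k + 1)) 1 := by
    have h := hasSum_geometric_two.mul_left ((1 : ℝ) / 2)
    rwa [show (1 : ℝ) / 2 * 2 = 1 by norm_num, funext fun k => (pow_succ' _ k).symm] at h
  have htail : ∑' k : ℕ, r ^ (k + N)! ≤ 1 :=
    hasSum_le (fun k =>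
      (pow_factorial_add_le h0 h1.le hN k).trans (pow_le_pow_left₀ (by positivity) hhalf _))
      ((summable_nat_add_iff N).2 hsum).hasSum hgeom
  rw [← hsum.sum_add_tsum_nat_add N]
  linarith

lemma exists_factorial_lt_le {x : ℝ} (hx : 1 < x) : ∃ n : ℕ, (n ! : ℝ) < x ∧ x ≤ (n + 1)! := by
  have hex : ∃ n : ℕ, x ≤ (n + 1)! :=
    ⟨⌈x⌉₊, (Nat.le_ceil x).trans <| by
      exact_mod_cast (Nat.le_succ _).trans (Nat.self_le_factorial _)⟩
  refine ⟨Nat.find hex, ?_, Nat.find_spec hex⟩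
  rcases h : Nat.find hex with _ | n
  · simpa using hx
  · exact lt_of_not_ge (Nat.find_min hex (h ▸ n.lt_succ_self))

lemma pow_le_exp_neg_mul {r : ℝ} (h0 : 0 ≤ r) (m : ℕ) : r ^ m ≤ exp (-((1 - r) * m)) :=
  calc r ^ m ≤ exp (-(1 - r)) ^ m := by
        gcongr
        simpa using one_sub_le_exp_neg (1 - r)
    _ = exp (-((1 - r) * m)) := by rw [← exp_nat_mul]; ring_nf

lemma exp_two_mul_le_mul_factorial (n : ℕ) : exp (2 * (n + 2)) ≤ exp (4 + exp 2) * n ! := by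
  have h := pow_div_factorial_le_exp _ (exp_pos 2).le n
  rw [div_le_iff₀ (by positivity)] at h
  calc exp (2 * (n + 2)) = exp 4 * exp 2 ^ n := by rw [← exp_nat_mul, ← exp_add]; ring_nf
    _ ≤ exp 4 * (exp (exp 2) * n !) := by gcongr
    _ = exp (4 + exp 2) * n ! := by rw [exp_add]; ring

lemma exp_tsum_pow_factorial_sq_mul_le {r : ℝ} (h0 : 0 < r) (h1 : r < 1) :
    exp (∑' k : ℕ, r ^ k !) ^ 2 * (1 - r) ≤ exp (4 + exp 2) := by
  have hε : 0 < 1 - r := by linarith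
  obtain ⟨n, hlt, hle⟩ := exists_factorial_lt_le ((one_lt_inv₀ hε).2 (by linarith))
  rw [← one_div, lt_div_iff₀ hε] at hlt
  have hhalf : r ^ (n + 1)! ≤ 1 / 2 :=
    calc r ^ (n + 1)! ≤ exp (-((1 - r) * (n + 1)!)) := pow_le_exp_neg_mul h0.le _
      _ ≤ exp (-1) := by
        rw [inv_le_iff_one_le_mul₀' hε] at hle
        gcongr
      _ ≤ 1 / 2 := by
        rw [exp_neg, one_div, inv_le_inv₀ (exp_pos 1) two_pos]
        linarith [add_one_le_exp 1]
  have hS : ∑' k : ℕ, r ^ k ! ≤ n + 2 := by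
    have := tsum_pow_factorial_le h0.le h1 (Nat.le_add_left 1 n) hhalf
    push_cast at this
    linarith
  calc exp (∑' k : ℕ, r ^ k !) ^ 2 * (1 - r) ≤ exp (2 * (n + 2)) * (1 - r) := by
        rw [← exp_nat_mul]
        gcongr
        push_cast
        linarith
    _ ≤ exp (4 + exp 2) * n ! * (1 - r) := by gcongr; exact exp_two_mul_le_mul_factorial n
    _ ≤ exp (4 + exp 2) := by
        rw [mul_assoc]
        exact mul_le_of_le_one_right (exp_pos _).le hlt.le

lemma exp_tsum_pow_factorial_le {r : ℝ} (h0 : 0 < r) (h1 : r < 1) :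
    exp (∑' k : ℕ, r ^ k !) ≤ √(exp (4 + exp 2)) * (1 - r) ^ (-(1 / 2) : ℝ) := by
  have hε : 0 < 1 - r := by linarith
  rw [rpow_neg hε.le, ← sqrt_eq_rpow, ← div_eq_mul_inv, le_div_iff₀ (sqrt_pos.2 hε)]
  calc exp (∑' k : ℕ, r ^ k !) * √(1 - r) = √(exp (∑' k : ℕ, r ^ k !) ^ 2 * (1 - r)) := by
        rw [sqrt_mul (by positivity), sqrt_sq (exp_pos _).le]
    _ ≤ √(exp (4 + exp 2)) := sqrt_le_sqrt (exp_tsum_pow_factorial_sq_mul_le h0 h1)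

lemma integrableOn_one_sub_rpow_Ioo {s : ℝ} (hs : -1 < s) :
    IntegrableOn (fun x : ℝ => (1 - x) ^ s) (Set.Ioo 0 1) := by
  rw [← intervalIntegrable_iff_integrableOn_Ioo_of_le zero_le_one]
  simpa using
    ((intervalIntegral.intervalIntegrable_rpow' hs (a := 0) (b := 1)).comp_sub_left 1).symm

/-- The improper integral `∫₀¹ exp(∑_{k=0}^∞ r^{k!}) dr` converges: the integrand is
integrable on `(0,1)`. -/
theorem lacunary_integral_converges :
    IntegrableOn (fun r : ℝ => Real.exp (∑' k : ℕ, r ^ (Nat.factorial k)))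
      (Set.Ioo (0:ℝ) 1) := by
  refine ((integrableOn_one_sub_rpow_Ioo (s := -(1 / 2)) (by norm_num)).const_mul
    √(exp (4 + exp 2))).mono' ?_ ?_
  · exact (Measurable.tsum fun k => measurable_id.pow_const _).exp.aestronglyMeasurable
  · filter_upwards [ae_restrict_mem measurableSet_Ioo] with r hr
    rw [norm_of_nonneg (exp_pos _).le]
    exact exp_tsum_pow_factorial_le hr.1 hr.2
end

section
/- Let f₁(z) = ∑_{n=1}^∞ z^{2ⁿ} (the lacunary series, convergent on the open unit disk) and let θ = 2π·p/2^s for some natural numbers p and s. Then the radial segment at angle θ has infinite length in the harmonic metric e^{2·Re(f₁)}g₀ on the unit disk: the function r ↦ exp(Re(∑_{n=1}^∞ (r·e^{iθ})^{2ⁿ})) is NOT integrable on the interval (0, 1). -/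
/-!
At a dyadic angle `θ = 2πp/2^s` the point `ω = e^{iθ}` satisfies `ω^(2^s) = 1`, so every term
`(rω)^(2^(n+1))` with `n + 1 ≥ s` equals the positive real `r^(2^(n+1))`, while the `s` remaining
terms have modulus at most `1`. By Bernoulli, `r^(2^j) ≥ 3/4` for `j ≤ m` once
`r ≥ 1 - 2^-(m+2)`, so on `(1 - 2^-(k+s+2), 1)` the exponent is at least `-s + 3k/4`. The integral
over that interval is then at least a constant times `(e^{3/4}/2)^k`, unbounded as `e^{3/4} > 2`.
-/

open MeasureTheory Filter Set

lemma summable_pow_two_pow_succ {R : Type*} [NormedRing R] [CompleteSpace R] {z : R}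
    (hz : ‖z‖ < 1) : Summable fun n : ℕ => z ^ (2 ^ (n + 1)) :=
  .of_norm_bounded (summable_geometric_of_lt_one (norm_nonneg z) hz) fun n =>
    (norm_pow_le' z (by positivity)).trans <|
      pow_le_pow_of_le_one (norm_nonneg z) hz.le
        (Nat.lt_two_pow_self.le.trans (Nat.pow_le_pow_right two_pos n.le_succ))

lemma exp_dyadic_angle_mul_I_pow (p s : ℕ) :
    Complex.exp (((2 * Real.pi * p / 2 ^ s : ℝ) : ℂ) * Complex.I) ^ (2 ^ s) = 1 := by
  rw [← Complex.exp_nat_mul, ← Complex.exp_nat_mul_two_pi_mul_I p]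
  congr 1
  push_cast
  field_simp

lemma three_quarters_le_pow_two_pow {r : ℝ} {m j : ℕ} (hr : 1 - (1 / 2) ^ (m + 2) ≤ r)
    (hr1 : r ≤ 1) (hjm : j ≤ m) : 3 / 4 ≤ r ^ (2 ^ j) := by
  have hδ : (1 / 2 : ℝ) ^ (m + 2) ≤ 1 / 4 := by
    calc (1 / 2 : ℝ) ^ (m + 2) = (1 / 2) ^ m * (1 / 4) := by ring
      _ ≤ 1 * (1 / 4) := by gcongr; exact pow_le_one₀ (by norm_num) (by norm_num)
      _ = 1 / 4 := one_mul _
  have hr0 : 0 ≤ r := by linarith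
  have bernoulli := one_add_mul_le_pow (a := -(1 / 2 : ℝ) ^ (m + 2)) (by linarith) (2 ^ m)
  have hprod : ((2 ^ m : ℕ) : ℝ) * (1 / 2) ^ (m + 2) = 1 / 4 := by
    push_cast
    rw [pow_add, ← mul_assoc, ← mul_pow]
    norm_num
  calc (3 / 4 : ℝ) = 1 + ((2 ^ m : ℕ) : ℝ) * -(1 / 2) ^ (m + 2) := by linarith
    _ ≤ (1 + -(1 / 2) ^ (m + 2)) ^ (2 ^ m) := bernoulli
    _ ≤ r ^ (2 ^ m) := by gcongr <;> linarith
    _ ≤ r ^ (2 ^ j) := pow_le_pow_of_le_one hr0 hr1 (Nat.pow_le_pow_right two_pos hjm)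

lemma neg_add_mul_le_re_tsum_pow_two_pow_succ {ω : ℂ} {s k : ℕ} (hω : ω ^ (2 ^ s) = 1)
    {r : ℝ} (hr : 1 - (1 / 2) ^ (k + s + 2) ≤ r) (hr1 : r < 1) :
    -(s : ℝ) + k * (3 / 4) ≤ (∑' n : ℕ, ((r : ℂ) * ω) ^ (2 ^ (n + 1))).re := by
  have hr0 : 0 ≤ r := by
    linarith [pow_le_one₀ (n := k + s + 2) (show (0 : ℝ) ≤ 1 / 2 by norm_num) (by norm_num)]
  have hω1 : ‖ω‖ = 1 := Complex.norm_eq_one_of_pow_eq_one hω (by positivity)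
  have hnorm : ‖(r : ℂ) * ω‖ = r := by
    rw [norm_mul, hω1, mul_one, Complex.norm_real, Real.norm_of_nonneg hr0]
  have hsum := summable_pow_two_pow_succ (z := (r : ℂ) * ω) (by rwa [hnorm])
  have htail (n : ℕ) :
      ((r : ℂ) * ω) ^ (2 ^ (n + s + 1)) = ((r ^ (2 ^ (n + s + 1)) : ℝ) : ℂ) := by
    have hωn : ω ^ (2 ^ (n + s + 1)) = 1 := orderOf_dvd_iff_pow_eq_one.1 <|
      (orderOf_dvd_of_pow_eq_one hω).trans (pow_dvd_pow 2 (by omega))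
    rw [mul_pow, hωn, mul_one, Complex.ofReal_pow]
  have hhead : -(s : ℝ) ≤ ∑ n ∈ Finset.range s, (((r : ℂ) * ω) ^ (2 ^ (n + 1))).re := by
    have hterm (n : ℕ) : -1 ≤ (((r : ℂ) * ω) ^ (2 ^ (n + 1))).re := by
      have h := Complex.abs_re_le_norm (((r : ℂ) * ω) ^ (2 ^ (n + 1)))
      rw [norm_pow, hnorm] at h
      linarith [abs_le.mp (h.trans (pow_le_one₀ hr0 hr1.le))]
    simpa using Finset.card_nsmul_le_sum (Finset.range s) _ _ fun n _ => hterm n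
  have htail_le : k * (3 / 4 : ℝ) ≤ ∑' n : ℕ, r ^ (2 ^ (n + s + 1)) := by
    have hsum_re : Summable fun n : ℕ => r ^ (2 ^ (n + s + 1)) :=
      (summable_nat_add_iff (f := fun n : ℕ => r ^ (2 ^ (n + 1))) s).2
        (summable_pow_two_pow_succ (by rwa [Real.norm_of_nonneg hr0]))
    have hterm (n : ℕ) (hn : n < k) : 3 / 4 ≤ r ^ (2 ^ (n + s + 1)) :=
      three_quarters_le_pow_two_pow hr hr1.le (by omega)
    calc k * (3 / 4 : ℝ) ≤ ∑ n ∈ Finset.range k, r ^ (2 ^ (n + s + 1)) := by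
          simpa using Finset.card_nsmul_le_sum (Finset.range k) _ _ fun n hn =>
            hterm n (Finset.mem_range.1 hn)
      _ ≤ ∑' n : ℕ, r ^ (2 ^ (n + s + 1)) :=
          hsum_re.sum_le_tsum _ fun n _ => by positivity
  rw [← hsum.sum_add_tsum_nat_add s]
  simp only [htail, ← Complex.ofReal_tsum, Complex.add_re, Complex.re_sum, Complex.ofReal_re]
  linarith

lemma mul_le_setIntegral_Ioo_of_le_on_Ioo {f : ℝ → ℝ} {a b c δ : ℝ}
    (hf : IntegrableOn f (Ioo a b)) (hf0 : ∀ x ∈ Ioo a b, 0 ≤ f x) (hδ : 0 ≤ δ)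
    (hδab : δ ≤ b - a) (hc : ∀ x ∈ Ioo (b - δ) b, c ≤ f x) :
    c * δ ≤ ∫ x in Ioo a b, f x := by
  have hsub : Ioo (b - δ) b ⊆ Ioo a b := Ioo_subset_Ioo_left (by linarith)
  have hvol : volume.real (Ioo (b - δ) b) = δ := by
    rw [Real.volume_real_Ioo_of_le (by linarith)]
    ring
  calc c * δ ≤ ∫ x in Ioo (b - δ) b, f x := by
        simpa [hvol] using setIntegral_ge_of_const_le_real measurableSet_Ioo
          (by simp) hc (hf.mono_set hsub)
    _ ≤ ∫ x in Ioo a b, f x :=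
        setIntegral_mono_set hf ((ae_restrict_iff' measurableSet_Ioo).2 (.of_forall hf0))
          hsub.eventuallyLE

/-- For `f₁(z) = ∑_{n=1}^∞ z^{2ⁿ}` and `θ = 2π·p/2^s` a dyadic angle, the radial segment
at angle `θ` has infinite length in the harmonic metric `e^{2 Re f₁}g₀`: the integrand
`r ↦ exp(Re(f₁(r·e^{iθ})))` is not integrable on `(0,1)`. -/
theorem lacunary_radial_length_infinite_re (p s : ℕ) (θ : ℝ)
    (hθ : θ = 2 * Real.pi * p / 2 ^ s) :
    ¬ IntegrableOn (fun r : ℝ =>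
        Real.exp ((∑' n : ℕ, ((r : ℂ) * Complex.exp (θ * Complex.I)) ^ (2 ^ (n + 1))).re))
      (Set.Ioo (0:ℝ) 1) := by
  intro hint
  set I := ∫ r in Ioo (0 : ℝ) 1,
    Real.exp ((∑' n : ℕ, ((r : ℂ) * Complex.exp (θ * Complex.I)) ^ (2 ^ (n + 1))).re)
  have hω : Complex.exp (θ * Complex.I) ^ (2 ^ s) = 1 := hθ ▸ exp_dyadic_angle_mul_I_pow p s
  have hq : 1 < Real.exp (3 / 4) / 2 := by
    rw [one_lt_div two_pos, ← Real.log_lt_iff_lt_exp two_pos]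
    linarith [Real.log_two_lt_d9]
  have hbound (k : ℕ) :
      Real.exp (-s) * (1 / 2) ^ (s + 2) * (Real.exp (3 / 4) / 2) ^ k ≤ I := by
    have hδ : (1 / 2 : ℝ) ^ (k + s + 2) ≤ 1 := pow_le_one₀ (by norm_num) (by norm_num)
    calc _ = Real.exp (-s + k * (3 / 4)) * (1 / 2) ^ (k + s + 2) := by
          rw [Real.exp_add, Real.exp_nat_mul]
          ring
      _ ≤ I := mul_le_setIntegral_Ioo_of_le_on_Ioo hint (fun _ _ => (Real.exp_pos _).le)
          (by positivity) (by linarith) fun r hr => Real.exp_le_exp.2 <|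
            neg_add_mul_le_re_tsum_pow_two_pow_succ hω (by linarith [hr.1]) hr.2
  have hunbounded : Tendsto (fun k : ℕ =>
      Real.exp (-s) * (1 / 2) ^ (s + 2) * (Real.exp (3 / 4) / 2) ^ k) atTop atTop :=
    (tendsto_pow_atTop_atTop_of_one_lt hq).const_mul_atTop (by positivity)
  obtain ⟨k, hk⟩ := (hunbounded.eventually_gt_atTop I).exists
  exact (hbound k).not_gt hk
end

section
/- Let f₁(z) = ∑_{n=1}^∞ z^{2ⁿ} (the lacunary series, convergent on the open unit disk) and let θ = 2π·p/2^s for some natural numbers p and s. Then the radial segment at angle θ has finite length in the harmonic metric e^{2·Im(f₁)}g₀ on the unit disk: the function r ↦ exp(Im(∑_{n=1}^∞ (r·e^{iθ})^{2ⁿ})) is integrable on the interval (0, 1). -/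
/-!
At a dyadic angle `θ = 2πp/2^s`, every term `(r e^{iθ})^{2^{n+1}}` with `n ≥ s` is the real
number `r^{2^{n+1}}`, since `2^{n+1}θ ∈ 2πℤ`. Hence `Im f₁` restricted to the ray is the
polynomial `∑_{n<s} r^{2^{n+1}} sin(2^{n+1}θ)`, and its exponential is continuous on `[0, 1]`.
-/

open MeasureTheory

theorem Complex.im_ofReal_mul_exp_mul_I_pow (r θ : ℝ) (k : ℕ) :
    (((r : ℂ) * exp (θ * I)) ^ k).im = r ^ k * Real.sin (k * θ) := by
  rw [mul_pow, ← exp_nat_mul, ← ofReal_pow, ← mul_assoc, ← ofReal_natCast, ← ofReal_mul,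
    im_ofReal_mul, exp_ofReal_mul_I_im]

theorem Real.sin_two_pow_mul_dyadic_angle (p : ℕ) {s m : ℕ} (hsm : s ≤ m) :
    Real.sin (2 ^ m * (2 * Real.pi * p / 2 ^ s)) = 0 := by
  have hm : (2 : ℝ) ^ m = 2 ^ (m - s) * 2 ^ s := by rw [← pow_add, Nat.sub_add_cancel hsm]
  have : (2 : ℝ) ^ m * (2 * Real.pi * p / 2 ^ s) = (2 * p * 2 ^ (m - s) : ℕ) * Real.pi := by
    rw [hm]; push_cast; field_simp
  rw [this, Real.sin_nat_mul_pi]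

theorem im_tsum_pow_two_pow_of_dyadic_angle {p s : ℕ} {θ : ℝ}
    (hθ : θ = 2 * Real.pi * p / 2 ^ s) {r : ℝ} (hr : |r| < 1) :
    (∑' n : ℕ, ((r : ℂ) * Complex.exp (θ * Complex.I)) ^ 2 ^ (n + 1)).im =
      ∑ n ∈ Finset.range s, r ^ 2 ^ (n + 1) * Real.sin (2 ^ (n + 1) * θ) := by
  have hz : ‖(r : ℂ) * Complex.exp (θ * Complex.I)‖ < 1 := by
    rwa [norm_mul, Complex.norm_exp_ofReal_mul_I, mul_one, Complex.norm_real, Real.norm_eq_abs]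
  have hsum : Summable fun n : ℕ => ((r : ℂ) * Complex.exp (θ * Complex.I)) ^ 2 ^ (n + 1) :=
    (summable_geometric_of_norm_lt_one hz).comp_injective
    ((Nat.pow_right_injective le_rfl).comp (add_left_injective 1))
  rw [Complex.im_tsum hsum, tsum_eq_sum (s := Finset.range s)]
  · simp only [Complex.im_ofReal_mul_exp_mul_I_pow, Nat.cast_pow, Nat.cast_ofNat]
  · intro n hn
    rw [Finset.mem_range, not_lt] at hn
    rw [Complex.im_ofReal_mul_exp_mul_I_pow, hθ, Nat.cast_pow, Nat.cast_ofNat,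
      Real.sin_two_pow_mul_dyadic_angle p (by omega), mul_zero]

/-- For `f₁(z) = ∑_{n=1}^∞ z^{2ⁿ}` and `θ = 2π·p/2^s` a dyadic angle, the radial segment
at angle `θ` has finite length in the harmonic metric `e^{2 Im f₁}g₀`: the integrand
`r ↦ exp(Im(f₁(r·e^{iθ})))` is integrable on `(0,1)`. -/
theorem lacunary_radial_length_finite_im (p s : ℕ) (θ : ℝ)
    (hθ : θ = 2 * Real.pi * p / 2 ^ s) :
    IntegrableOn (fun r : ℝ =>
        Real.exp ((∑' n : ℕ, ((r : ℂ) * Complex.exp (θ * Complex.I)) ^ (2 ^ (n + 1))).im))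
      (Set.Ioo (0:ℝ) 1) := by
  have hcont : Continuous fun r : ℝ =>
      Real.exp (∑ n ∈ Finset.range s, r ^ 2 ^ (n + 1) * Real.sin (2 ^ (n + 1) * θ)) := by
    fun_prop
  refine (hcont.integrableOn_Icc.mono_set Set.Ioo_subset_Icc_self).congr_fun
    (fun r hr => ?_) measurableSet_Ioo
  rw [im_tsum_pow_two_pow_of_dyadic_angle hθ (abs_lt.2 ⟨by linarith [hr.1], hr.2⟩)]
end
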